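/- Let T ≥ 2 and let f ∈ ℂ^T with f_0 = 1, all entries nonzero, and |f_i| ≤ 1 for all i; set γ = min_i |f_i|² > 0. Fix η > 0 with η² < 4Tγ and δ ∈ (0,1). Suppose for each 1 ≤ i ≤ T−1 the estimate Ẑ_{ii} is an empirical mean of N_diag independent [0,1]-valued random variables with mean |f_i|², and for each 0 ≤ i ≤ T−2 the real and imaginary parts of Ẑ_{i,i+1} are empirical means of N_off independent [0,1]-valued random variables with means Re(f_i conj(f_{i+1})) and Im(f_i conj(f_{i+1})), all families independent. Let f̂ be the K = 1 block-by-block algebraic estimate defined by f̂_0 = 1 and f̂_i = √(|Ẑ_{ii}|)·e^{i(θ̂_{i−1} − arg Ẑ_{i−1,i})}. If N_diag ≥ (8T/(γη²))·log(4T/δ) and N_off ≥ (32T(2T³ − 3T² + T)/(3γη⁴))·log(8(T−1)/δ), then with probability at least 1 − δ, ‖f̂ − f‖₂ ≤ η. -/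

import Mathlib

open MeasureTheory ProbabilityTheory

section auxiliary

open Real

variable {Ω : Type*} [MeasurableSpace Ω] {μ : Measure Ω}

lemma chord_exp {x : ℝ} (h0 : 0 ≤ x) (h1 : x ≤ 1) (t : ℝ) :
    Real.exp (t * x) ≤ 1 - x + x * Real.exp t := by
  calc Real.exp (t * x) = Real.exp ((1-x) * 0 + x * t) := by ring_nf
    _ ≤ (1-x) * Real.exp 0 + x * Real.exp t := convexOn_exp.2 (Set.mem_univ (0:ℝ))
        (Set.mem_univ t) (by linarith) h0 (by ring)
    _ = 1 - x + x * Real.exp t := by rw [Real.exp_zero]; ring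

-- Hoeffding's lemma key inequality
lemma hoeff_key {p : ℝ} (hp0 : 0 ≤ p) (hp1 : p ≤ 1) (t : ℝ) :
    1 - p + p * Real.exp t ≤ Real.exp (t * p + t ^ 2 / 8) := by
  set D : ℝ → ℝ := fun x => 1 - p + p * Real.exp x with hD
  have hDpos : ∀ x, 0 < D x := by
    intro x
    have h1 := Real.exp_pos x
    rcases eq_or_lt_of_le hp0 with h | h
    · simp [hD, ← h]
    · have : 0 < p * Real.exp x := mul_pos h h1
      simp only [hD]
      linarith
  set g : ℝ → ℝ := fun x => p * Real.exp x / D x - p with hg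
  set L : ℝ → ℝ := fun x => Real.log (D x) - x * p with hL
  have hDD : ∀ x, HasDerivAt D (p * Real.exp x) x := by
    intro x
    exact ((Real.hasDerivAt_exp x).const_mul p).const_add (1 - p)
  have hLD : ∀ x, HasDerivAt L (g x) x := by
    intro x
    have h1 : HasDerivAt (fun x => Real.log (D x)) (p * Real.exp x / D x) x :=
      (hDD x).log (hDpos x).ne'
    exact (h1.sub (hasDerivAt_id x |>.mul_const p)).congr_deriv (by simp [hg])
  have hgD : ∀ x, HasDerivAt g (p * Real.exp x * (1 - p) / (D x) ^ 2) x := by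
    intro x
    have h1 : HasDerivAt (fun x => p * Real.exp x / D x)
        ((p * Real.exp x * D x - p * Real.exp x * (p * Real.exp x)) / (D x) ^ 2) x :=
      ((Real.hasDerivAt_exp x).const_mul p).div (hDD x) (hDpos x).ne'
    have h2 : (p * Real.exp x * D x - p * Real.exp x * (p * Real.exp x)) / (D x) ^ 2
        = p * Real.exp x * (1 - p) / (D x) ^ 2 := by
      rw [hD]; ring_nf
    rw [h2] at h1
    simpa [hg] using h1.sub_const p
  have hg'le : ∀ x, ‖p * Real.exp x * (1 - p) / (D x) ^ 2‖ ≤ 1/4 := by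
    intro x
    have h1 := hDpos x
    have h2 : 0 ≤ p * Real.exp x * (1 - p) :=
      mul_nonneg (mul_nonneg hp0 (Real.exp_pos x).le) (sub_nonneg.2 hp1)
    rw [Real.norm_eq_abs, abs_of_nonneg (by positivity)]
    rw [div_le_iff₀ (by positivity)]
    nlinarith [sq_nonneg ((1-p) - p * Real.exp x)]
  have hgle : ∀ x, |g x| ≤ |x| / 4 := by
    intro x
    have h0 : g 0 = 0 := by simp [hg, hD]
    have := Convex.norm_image_sub_le_of_norm_hasDerivWithin_le
      (fun y _ => (hgD y).hasDerivWithinAt) (fun y _ => hg'le y)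
      (convex_univ) (Set.mem_univ (0:ℝ)) (Set.mem_univ x)
    rw [h0, sub_zero, Real.norm_eq_abs, sub_zero, Real.norm_eq_abs] at this
    linarith [this]
  -- M = L - x^2/8 has max at 0
  have hM : ∀ x, L x ≤ x ^ 2 / 8 := by
    intro x
    set M : ℝ → ℝ := fun x => L x - x ^ 2 / 8 with hMdef
    have hMD : ∀ y, HasDerivAt M (g y - y / 4) y := by
      intro y
      have := (hLD y).sub ((hasDerivAt_pow 2 y).div_const 8)
      exact this.congr_deriv (by push_cast; ring)
    have hMc : Continuous M := by
      have : Differentiable ℝ M := fun y => (hMD y).differentiableAt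
      exact this.continuous
    have hM0 : M 0 = 0 := by simp [hMdef, hL, hD]
    rcases le_total 0 x with hx | hx
    · have : AntitoneOn M (Set.Ici 0) := by
        apply antitoneOn_of_deriv_nonpos (convex_Ici 0) (hMc.continuousOn)
        · intro y _; exact (hMD y).differentiableAt.differentiableWithinAt
        · intro y hy
          rw [interior_Ici] at hy
          rw [(hMD y).deriv]
          have := hgle y
          have := abs_le.1 (hgle y)
          rw [abs_of_nonneg (le_of_lt hy)] at this
          linarith [this.2]
      have := this (Set.self_mem_Ici) (Set.mem_Ici.2 hx) hx
      rw [hM0] at this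
      simpa [hMdef] using this
    · have : MonotoneOn M (Set.Iic 0) := by
        apply monotoneOn_of_deriv_nonneg (convex_Iic 0) (hMc.continuousOn)
        · intro y _; exact (hMD y).differentiableAt.differentiableWithinAt
        · intro y hy
          rw [interior_Iic] at hy
          rw [(hMD y).deriv]
          have := abs_le.1 (hgle y)
          rw [abs_of_nonpos (le_of_lt hy)] at this
          linarith [this.1]
      have := this (Set.mem_Iic.2 hx) (Set.self_mem_Iic) hx
      rw [hM0] at this
      simpa [hMdef] using this
  have := hM t
  have hlog : Real.log (D t) ≤ t * p + t ^ 2 / 8 := by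
    simp only [hL] at this; linarith
  calc D t = Real.exp (Real.log (D t)) := (Real.exp_log (hDpos t)).symm
    _ ≤ Real.exp (t * p + t ^ 2 / 8) := Real.exp_le_exp.2 hlog


lemma sum_range_sq_eq (n : ℕ) :
    6 * ∑ i ∈ Finset.range n, (i:ℝ) ^ 2 = 2 * (n:ℝ) ^ 3 - 3 * (n:ℝ) ^ 2 + (n:ℝ) := by
  induction n with
  | zero => simp
  | succ n ih =>
    rw [Finset.sum_range_succ, mul_add]
    push_cast
    push_cast at ih
    ring_nf
    ring_nf at ih
    linarith

variable [IsProbabilityMeasure μ]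



lemma integrable_of_bdd {g : Ω → ℝ} (hg : Measurable g) {C : ℝ} (h : ∀ ω, |g ω| ≤ C) :
    Integrable g μ :=
  (integrable_const C).mono' hg.aestronglyMeasurable (ae_of_all _ fun ω => by
    simpa [Real.norm_eq_abs] using h ω)

lemma mgf_le_of_mean {X : Ω → ℝ} (hmeas : Measurable X)
    (hrange : ∀ ω, X ω ∈ Set.Icc (0:ℝ) 1) {m : ℝ} (hmean : ∫ ω, X ω ∂μ = m) (t : ℝ) :
    mgf X μ t ≤ Real.exp (t * m + t ^ 2 / 8) := by
  have hm0 : 0 ≤ m := hmean ▸ integral_nonneg fun ω => (hrange ω).1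
  have hm1 : m ≤ 1 := by
    rw [← hmean]
    calc ∫ ω, X ω ∂μ ≤ ∫ _, (1:ℝ) ∂μ := integral_mono
          (integrable_of_bdd hmeas (fun ω => abs_le.2 ⟨by linarith [(hrange ω).1], (hrange ω).2⟩))
          (integrable_const 1) (fun ω => (hrange ω).2)
      _ = 1 := by simp
  have hXint : Integrable X μ :=
    integrable_of_bdd hmeas (fun ω => abs_le.2 ⟨by linarith [(hrange ω).1], (hrange ω).2⟩)
  have h1 : mgf X μ t ≤ ∫ ω, (1 - X ω + X ω * Real.exp t) ∂μ := by
    refine integral_mono ?_ ?_ ?_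
    · exact integrable_of_bdd (hmeas.const_mul t).exp (C := Real.exp |t|) (fun ω => by
        rw [abs_of_nonneg (Real.exp_pos _).le, Real.exp_le_exp]
        calc t * X ω ≤ |t * X ω| := le_abs_self _
          _ = |t| * |X ω| := abs_mul _ _
          _ ≤ |t| * 1 := by
              apply mul_le_mul_of_nonneg_left _ (abs_nonneg t)
              rw [abs_of_nonneg (hrange ω).1]; exact (hrange ω).2
          _ = |t| := mul_one _)
    · exact ((integrable_const 1).sub hXint).add (hXint.mul_const _)
    · exact fun ω => chord_exp (hrange ω).1 (hrange ω).2 t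
  have h2 : ∫ ω, (1 - X ω + X ω * Real.exp t) ∂μ = 1 - m + m * Real.exp t := by
    have e1 : Integrable (fun ω => 1 - X ω) μ := (integrable_const 1).sub hXint
    have e2 : Integrable (fun ω => X ω * Real.exp t) μ := hXint.mul_const _
    rw [integral_add e1 e2, integral_sub (integrable_const 1) hXint,
      integral_mul_const, hmean]
    simp
  calc mgf X μ t ≤ 1 - m + m * Real.exp t := h2 ▸ h1
    _ ≤ _ := hoeff_key hm0 hm1 t

/-- Upper tail Hoeffding for a finite iid-type family. -/
lemma hoeff_upper {N : ℕ} {X : Fin N → Ω → ℝ} (hmeas : ∀ k, Measurable (X k))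
    (hrange : ∀ k ω, X k ω ∈ Set.Icc (0:ℝ) 1) {m : ℝ}
    (hmean : ∀ k, ∫ ω, X k ω ∂μ = m)
    (hindep : iIndepFun X μ) {t : ℝ} (ht : 0 ≤ t) :
    μ {ω | (N:ℝ) * m + (N:ℝ) * t ≤ ∑ k, X k ω} ≤
      ENNReal.ofReal (Real.exp (-2 * N * t ^ 2)) := by
  have hSmeas : Measurable (∑ k, X k) := by
    rw [Finset.sum_fn]
    exact Finset.measurable_sum _ (fun k _ => hmeas k)
  have hSint : Integrable (fun ω => Real.exp (4 * t * (∑ k, X k) ω)) μ := by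
    refine integrable_of_bdd ((hSmeas.const_mul _).exp) (C := Real.exp (4 * t * N)) (fun ω => by
      rw [abs_of_nonneg (Real.exp_pos _).le, Real.exp_le_exp]
      have : (∑ k, X k) ω ≤ N := by
        rw [Finset.sum_apply]
        calc (∑ k, X k ω) ≤ ∑ k : Fin N, (1:ℝ) := Finset.sum_le_sum fun k _ => (hrange k ω).2
          _ = N := by simp
      nlinarith)
  have hcher := measure_ge_le_exp_mul_mgf (μ := μ) (X := ∑ k, X k)
    ((N:ℝ) * m + (N:ℝ) * t) (by positivity : (0:ℝ) ≤ 4 * t) hSint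
  have hmgf : mgf (∑ k, X k) μ (4 * t) ≤ Real.exp ((N:ℝ) * (4 * t * m + (4*t) ^ 2 / 8)) := by
    rw [hindep.mgf_sum hmeas]
    calc ∏ k : Fin N, mgf (X k) μ (4 * t)
        ≤ ∏ _k : Fin N, Real.exp (4 * t * m + (4*t) ^ 2 / 8) :=
          Finset.prod_le_prod (fun k _ => mgf_nonneg)
            (fun k _ => mgf_le_of_mean (hmeas k) (hrange k) (hmean k) _)
      _ = Real.exp ((N:ℝ) * (4 * t * m + (4*t) ^ 2 / 8)) := by
          rw [Finset.prod_const, ← Real.exp_nat_mul]; simp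
  have hfinal : (μ {ω | (N:ℝ) * m + (N:ℝ) * t ≤ ∑ k, X k ω}).toReal ≤
      Real.exp (-2 * N * t ^ 2) := by
    have hset : {ω | (N:ℝ) * m + (N:ℝ) * t ≤ ∑ k, X k ω}
        = {ω | (N:ℝ) * m + (N:ℝ) * t ≤ (∑ k, X k) ω} := by
      ext ω; simp [Finset.sum_apply]
    rw [hset]
    calc (μ {ω | (N:ℝ) * m + (N:ℝ) * t ≤ (∑ k, X k) ω}).toReal
        ≤ Real.exp (-(4*t) * ((N:ℝ) * m + (N:ℝ) * t)) * mgf (∑ k, X k) μ (4 * t) := hcher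
      _ ≤ Real.exp (-(4*t) * ((N:ℝ) * m + (N:ℝ) * t)) *
            Real.exp ((N:ℝ) * (4 * t * m + (4*t) ^ 2 / 8)) := by
          exact mul_le_mul_of_nonneg_left hmgf (Real.exp_pos _).le
      _ = Real.exp (-2 * N * t ^ 2) := by rw [← Real.exp_add]; ring_nf
  rw [ENNReal.le_ofReal_iff_toReal_le (measure_ne_top μ _) (Real.exp_pos _).le]
  exact hfinal

/-- Two-sided Hoeffding bound for the empirical mean. -/
lemma hoeff_two_sided {N : ℕ} (hN : 0 < N) {X : Fin N → Ω → ℝ} (hmeas : ∀ k, Measurable (X k))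
    (hrange : ∀ k ω, X k ω ∈ Set.Icc (0:ℝ) 1) {m : ℝ}
    (hmean : ∀ k, ∫ ω, X k ω ∂μ = m)
    (hindep : iIndepFun X μ) {t : ℝ} (ht : 0 ≤ t) :
    μ {ω | t < |(∑ k, X k ω) / (N:ℝ) - m|} ≤
      ENNReal.ofReal (2 * Real.exp (-2 * N * t ^ 2)) := by
  have hNpos : (0:ℝ) < N := Nat.cast_pos.2 hN
  have hY : ∀ k, Measurable (fun ω => 1 - X k ω) := fun k => (hmeas k).const_sub 1
  have hsub : {ω | t < |(∑ k, X k ω) / (N:ℝ) - m|} ⊆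
      {ω | (N:ℝ) * m + (N:ℝ) * t ≤ ∑ k, X k ω} ∪
      {ω | (N:ℝ) * (1 - m) + (N:ℝ) * t ≤ ∑ k, (1 - X k ω)} := by
    intro ω hω
    simp only [Set.mem_setOf_eq] at hω
    rcases lt_or_ge ((∑ k, X k ω) / (N:ℝ)) m with h | h
    · right
      rw [abs_of_neg (by linarith)] at hω
      have : ∑ k, (1 - X k ω) = (N:ℝ) - ∑ k, X k ω := by
        rw [Finset.sum_sub_distrib]; simp
      rw [Set.mem_setOf_eq, this]
      have h2 : (∑ k, X k ω) / (N:ℝ) < m - t := by linarith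
      have h3 : (∑ k, X k ω) < (m - t) * N := by
        rw [div_lt_iff₀ hNpos] at h2; linarith
      nlinarith
    · left
      rw [abs_of_nonneg (by linarith)] at hω
      have h2 : m + t < (∑ k, X k ω) / (N:ℝ) := by linarith
      rw [lt_div_iff₀ hNpos] at h2
      rw [Set.mem_setOf_eq]; nlinarith
  calc μ _ ≤ μ ({ω | (N:ℝ) * m + (N:ℝ) * t ≤ ∑ k, X k ω} ∪
      {ω | (N:ℝ) * (1 - m) + (N:ℝ) * t ≤ ∑ k, (1 - X k ω)}) := measure_mono hsub
    _ ≤ μ {ω | (N:ℝ) * m + (N:ℝ) * t ≤ ∑ k, X k ω} +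
        μ {ω | (N:ℝ) * (1 - m) + (N:ℝ) * t ≤ ∑ k, (1 - X k ω)} := measure_union_le _ _
    _ ≤ ENNReal.ofReal (Real.exp (-2 * N * t ^ 2)) + ENNReal.ofReal (Real.exp (-2 * N * t ^ 2)) := by
        gcongr
        · exact hoeff_upper hmeas hrange hmean hindep ht
        · exact hoeff_upper (X := fun k ω => 1 - X k ω) hY
            (fun k ω => ⟨by show (0:ℝ) ≤ 1 - X k ω; linarith [(hrange k ω).2],
              by show (1:ℝ) - X k ω ≤ 1; linarith [(hrange k ω).1]⟩)
            (fun k => by rw [integral_sub (integrable_const 1)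
                (integrable_of_bdd (hmeas k) (fun ω => abs_le.2
                  ⟨by linarith [(hrange k ω).1], (hrange k ω).2⟩)), hmean k]; simp)
            (hindep.comp (fun _ x => 1 - x) (fun _ => measurable_const.sub measurable_id)) ht
    _ = ENNReal.ofReal (2 * Real.exp (-2 * N * t ^ 2)) := by
        rw [← ENNReal.ofReal_add (Real.exp_pos _).le (Real.exp_pos _).le]; ring_nf



/-- Restriction of an independent family along an injective map. -/
lemma iIndepFun_precomp {ι κ : Type*} {f : ι → Ω → ℝ}
    (h : iIndepFun f μ) {g : κ → ι} (hg : Function.Injective g) :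
    iIndepFun (fun k => f (g k)) μ := by
  classical
  rw [iIndepFun_iff_measure_inter_preimage_eq_mul] at h ⊢
  intro S sets hsets
  set sets' : ι → Set ℝ := fun i => if hi : ∃ k ∈ S, g k = i then sets hi.choose else Set.univ
    with hsets'def
  have key : ∀ k ∈ S, sets' (g k) = sets k := by
    intro k hk
    have hex : ∃ k' ∈ S, g k' = g k := ⟨k, hk, rfl⟩
    have := hex.choose_spec
    have hkk : hex.choose = k := hg this.2
    simp only [hsets'def, dif_pos hex, hkk]
  have h1 := h (S.image g) (sets := sets') (fun i hi => by
    rcases Finset.mem_image.1 hi with ⟨k, hk, rfl⟩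
    rw [key k hk]; exact hsets k hk)
  rw [Finset.prod_image (fun a _ b _ hab => hg hab)] at h1
  have h2 : ⋂ i ∈ S.image g, f i ⁻¹' sets' i = ⋂ k ∈ S, f (g k) ⁻¹' sets k := by
    rw [Finset.set_biInter_finset_image]
    exact Set.iInter₂_congr fun k hk => by rw [key k hk]
  rw [h2] at h1
  rw [h1]
  exact Finset.prod_congr rfl fun k hk => by rw [key k hk]

/-- Unit phasor perturbation. -/
lemma unit_diff {w z : ℂ} (hw : w ≠ 0) (hz : z ≠ 0) :
    norm (w / norm w - z / norm z) ≤
      2 * norm (w - z) / norm z := by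
  have ha : (0:ℝ) < norm w := norm_pos_iff.mpr hw
  have hb : (0:ℝ) < norm z := norm_pos_iff.mpr hz
  have haz : (norm w : ℂ) ≠ 0 := Complex.ofReal_ne_zero.2 ha.ne'
  have hbz : (norm z : ℂ) ≠ 0 := Complex.ofReal_ne_zero.2 hb.ne'
  have hid : w / (norm w : ℂ) - z / (norm z : ℂ)
      = (w - z) / (norm z : ℂ)
        + w * ((norm z : ℂ) - (norm w : ℂ))
          / ((norm w : ℂ) * (norm z : ℂ)) := by
    field_simp
    ring
  rw [hid]
  calc norm _ ≤ norm ((w - z) / (norm z : ℂ))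
        + norm (w * ((norm z : ℂ) - (norm w : ℂ))
          / ((norm w : ℂ) * (norm z : ℂ))) := norm_add_le _ _
    _ ≤ norm (w - z) / norm z + norm (w - z) / norm z := by
        gcongr ?_ + ?_
        · rw [norm_div]
          simp [Complex.norm_real, Real.norm_eq_abs, abs_of_pos hb]
        · rw [norm_div, norm_mul, norm_mul]
          simp only [Complex.norm_real, Real.norm_eq_abs, abs_of_pos ha, abs_of_pos hb]
          rw [div_le_div_iff₀ (by positivity) hb]
          have h1 : norm ((norm z : ℂ) - (norm w : ℂ))
              ≤ norm (w - z) := by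
            rw [← Complex.ofReal_sub, Complex.norm_real, Real.norm_eq_abs]
            calc |norm z - norm w| ≤ norm (z - w) :=
                  abs_norm_sub_norm_le z w
              _ = norm (w - z) := by rw [← neg_sub w z, norm_neg]
          calc norm w * norm ((norm z:ℂ) - (norm w:ℂ)) * norm z
              ≤ norm w * norm (w - z) * norm z := by
                gcongr
            _ = norm (w - z) * (norm w * norm z) := by ring
    _ = 2 * norm (w - z) / norm z := by ring

/-- The phasor `exp(-arg w * I)` is close to `conj z / |z|`. -/
lemma phasor_diff (w : ℂ) {z : ℂ} (hz : z ≠ 0) :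
    norm (Complex.exp (-(w.arg : ℂ) * Complex.I)
      - (starRingEnd ℂ) z / (norm z : ℂ)) ≤
      2 * norm (w - z) / norm z := by
  have hb : (0:ℝ) < norm z := norm_pos_iff.mpr hz
  by_cases hw : w = 0
  · subst hw
    simp only [Complex.arg_zero, Complex.ofReal_zero, neg_zero, zero_mul, Complex.exp_zero,
      zero_sub]
    have h1 : norm ((1:ℂ) - (starRingEnd ℂ) z / (norm z : ℂ)) ≤ 2 := by
      calc norm ((1:ℂ) - (starRingEnd ℂ) z / (norm z : ℂ))
          ≤ norm 1 + norm ((starRingEnd ℂ) z / (norm z : ℂ)) :=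
            norm_sub_le _ _
        _ = 2 := by
            rw [norm_div]
            simp only [Complex.norm_conj, Complex.norm_real, Real.norm_eq_abs, abs_of_pos hb, div_self hb.ne',
              norm_one]
            norm_num
    rw [show norm (-z) = norm z from norm_neg z]
    calc norm ((1:ℂ) - (starRingEnd ℂ) z / (norm z : ℂ))
        ≤ 2 := h1
      _ = 2 * norm z / norm z := by field_simp
  · have hexp : Complex.exp (-(w.arg : ℂ) * Complex.I)
        = (starRingEnd ℂ) w / (norm w : ℂ) := by
      have h1 : Complex.exp ((w.arg : ℂ) * Complex.I) = w / (norm w : ℂ) := by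
        rw [eq_div_iff (by simpa using (norm_ne_zero_iff.mpr hw))]
        rw [mul_comm]
        exact Complex.norm_mul_exp_arg_mul_I w
      have h2 : Complex.exp (-(w.arg : ℂ) * Complex.I)
          = (starRingEnd ℂ) (Complex.exp ((w.arg : ℂ) * Complex.I)) := by
        rw [← Complex.exp_conj]
        congr 1
        simp [Complex.conj_I]
      rw [h2, h1, map_div₀]
      simp
    rw [hexp]
    have hconj : norm ((starRingEnd ℂ) w / (norm w : ℂ)
        - (starRingEnd ℂ) z / (norm z : ℂ))
        = norm (w / (norm w : ℂ) - z / (norm z : ℂ)) := by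
      rw [show (starRingEnd ℂ) w / (norm w : ℂ) - (starRingEnd ℂ) z / (norm z : ℂ)
        = (starRingEnd ℂ) (w / (norm w : ℂ) - z / (norm z : ℂ)) by
          rw [map_sub, map_div₀, map_div₀]
          simp [Complex.conj_ofReal]]
      exact Complex.norm_conj _
    rw [hconj]
    exact unit_diff hw hz

end auxiliary

set_option maxHeartbeats 1600000

/-- **Stability of the `K = 1` block-by-block algebraic estimator (query
complexity).**  Let `f ∈ ℂ^T` with `f_0 = 1`, all entries nonzero and of
modulus at most `1`, and `γ = min_i |f_i|²`.  Each diagonal entry `|f_i|²` is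
estimated by the empirical mean of `N_diag` independent `[0,1]`-valued samples,
and the real and imaginary parts of each first off-diagonal entry
`f_i·conj(f_{i+1})` by empirical means of `N_off` such samples, all families
jointly independent.  If
`N_diag ≥ (8T/(γη²))·log(4T/δ)` and
`N_off ≥ (32T(2T³−3T²+T)/(3γη⁴))·log(8(T−1)/δ)`,
then the block-by-block algebraic estimate `f̂` satisfies `‖f̂ − f‖₂ ≤ η`
with probability at least `1 − δ`. -/
theorem stmt9 {Ω : Type*} [MeasurableSpace Ω] (μ : Measure Ω) [IsProbabilityMeasure μ]
    (T : ℕ) (hT : 2 ≤ T)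
    (f : ℕ → ℂ) (hf0 : f 0 = 1)
    (hfne : ∀ i < T, f i ≠ 0) (hfle : ∀ i < T, ‖f i‖ ≤ 1)
    (γ : ℝ)
    (hγ : γ = (Finset.range T).inf'
      (Finset.nonempty_range_iff.mpr (by omega)) (fun i => ‖f i‖ ^ 2))
    (η : ℝ) (hη : 0 < η) (hη2 : η ^ 2 < 4 * (T : ℝ) * γ)
    (δ : ℝ) (hδ0 : 0 < δ) (hδ1 : δ < 1)
    (Ndiag Noff : ℕ)
    (Xd : ℕ → Fin Ndiag → Ω → ℝ) (XR XI : ℕ → Fin Noff → Ω → ℝ)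
    (hXdmeas : ∀ i k, Measurable (Xd i k))
    (hXRmeas : ∀ i k, Measurable (XR i k))
    (hXImeas : ∀ i k, Measurable (XI i k))
    (hXdrange : ∀ i k ω, Xd i k ω ∈ Set.Icc (0 : ℝ) 1)
    (hXRrange : ∀ i k ω, XR i k ω ∈ Set.Icc (0 : ℝ) 1)
    (hXIrange : ∀ i k ω, XI i k ω ∈ Set.Icc (0 : ℝ) 1)
    (hXdmean : ∀ i, 1 ≤ i → i < T → ∀ k,
      ∫ ω, Xd i k ω ∂μ = ‖f i‖ ^ 2)
    (hXRmean : ∀ i, i + 1 < T → ∀ k,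
      ∫ ω, XR i k ω ∂μ = (f i * (starRingEnd ℂ) (f (i + 1))).re)
    (hXImean : ∀ i, i + 1 < T → ∀ k,
      ∫ ω, XI i k ω ∂μ = (f i * (starRingEnd ℂ) (f (i + 1))).im)
    (hIndep : iIndepFun
      (Sum.elim (fun q : {i : ℕ // 1 ≤ i ∧ i < T} × Fin Ndiag => Xd q.1.1 q.2)
        (Sum.elim (fun q : {i : ℕ // i + 1 < T} × Fin Noff => XR q.1.1 q.2)
          (fun q : {i : ℕ // i + 1 < T} × Fin Noff => XI q.1.1 q.2))) μ)
    (hNdiag : 8 * (T : ℝ) / (γ * η ^ 2) * Real.log (4 * (T : ℝ) / δ) ≤ (Ndiag : ℝ))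
    (hNoff : 32 * (T : ℝ) * (2 * (T : ℝ) ^ 3 - 3 * (T : ℝ) ^ 2 + (T : ℝ)) /
        (3 * γ * η ^ 4) * Real.log (8 * ((T : ℝ) - 1) / δ) ≤ (Noff : ℝ))
    -- the bandwidth-one block-by-block algebraic estimator, built pointwise in `ω`
    (θhat : ℕ → Ω → ℝ) (hθ0 : ∀ ω, θhat 0 ω = 0)
    (hθ : ∀ i, 1 ≤ i → i < T → ∀ ω, θhat i ω = θhat (i - 1) ω -
      Complex.arg ((((∑ k, XR (i - 1) k ω) / (Noff : ℝ) : ℝ) : ℂ) +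
        (((∑ k, XI (i - 1) k ω) / (Noff : ℝ) : ℝ) : ℂ) * Complex.I))
    (fhat : ℕ → Ω → ℂ) (hfhat0 : ∀ ω, fhat 0 ω = 1)
    (hfhat : ∀ i, 1 ≤ i → i < T → ∀ ω,
      fhat i ω = (Real.sqrt |(∑ k, Xd i k ω) / (Ndiag : ℝ)| : ℂ) *
        Complex.exp ((θhat i ω : ℂ) * Complex.I)) :
    ENNReal.ofReal (1 - δ) ≤
      μ {ω | Real.sqrt (∑ i ∈ Finset.range T,
        ‖fhat i ω - f i‖ ^ 2) ≤ η} := by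
  -- basic positivity facts
  set Tr : ℝ := (T : ℝ) with hTrdef
  have hTr2 : (2:ℝ) ≤ Tr := by rw [hTrdef]; exact_mod_cast hT
  have hγf : ∀ i, i < T → γ ≤ norm (f i) ^ 2 := by
    intro i hi
    rw [hγ]
    exact Finset.inf'_le _ (Finset.mem_range.2 hi)
  have hγpos : 0 < γ := by
    rw [hγ, Finset.lt_inf'_iff]
    intro i hi
    exact pow_pos (norm_pos_iff.mpr (hfne i (Finset.mem_range.1 hi))) 2
  have hγ1 : γ ≤ 1 := by
    have := hγf 0 (by omega)
    rw [hf0] at this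
    simpa using this
  have hsγ : 0 < Real.sqrt γ := Real.sqrt_pos.2 hγpos
  -- the logs are positive
  set L : ℝ := Real.log (4 * Tr / δ) with hLdef
  set L' : ℝ := Real.log (8 * (Tr - 1) / δ) with hL'def
  have hLpos : 0 < L := Real.log_pos (by rw [lt_div_iff₀ hδ0]; nlinarith)
  have hL'pos : 0 < L' := Real.log_pos (by rw [lt_div_iff₀ hδ0]; nlinarith)
  -- sample sizes are positive
  have hNd0 : 0 < Ndiag := by
    by_contra h
    have h0 : (Ndiag : ℝ) = 0 := by push_cast [Nat.eq_zero_of_not_pos h]; rfl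
    have : (0:ℝ) < 8 * Tr / (γ * η ^ 2) * L := by positivity
    linarith [hNdiag, this, h0.le]
  have hP : (0:ℝ) < 2 * Tr ^ 3 - 3 * Tr ^ 2 + Tr := by nlinarith
  have hNo0 : 0 < Noff := by
    by_contra h
    have h0 : (Noff : ℝ) = 0 := by push_cast [Nat.eq_zero_of_not_pos h]; rfl
    have : (0:ℝ) < 32 * Tr * (2 * Tr ^ 3 - 3 * Tr ^ 2 + Tr) / (3 * γ * η ^ 4) * L' := by
      positivity
    linarith [hNoff, this, h0.le]
  have hNdR : (0:ℝ) < (Ndiag:ℝ) := by exact_mod_cast hNd0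
  have hNoR : (0:ℝ) < (Noff:ℝ) := by exact_mod_cast hNo0
  -- sum of squares
  set Sr : ℝ := ∑ i ∈ Finset.range T, (i:ℝ) ^ 2 with hSrdef
  have hSr6 : 6 * Sr = 2 * Tr ^ 3 - 3 * Tr ^ 2 + Tr := by
    rw [hSrdef, hTrdef]; exact sum_range_sq_eq T
  have hSrpos : 0 < Sr := by nlinarith
  -- the accuracy levels
  set εd : ℝ := Real.sqrt (γ * η ^ 2 / (16 * Tr)) with hεddef
  set εo : ℝ := Real.sqrt (γ * η ^ 4 / (128 * Tr * Sr)) with hεodef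
  have hεd2 : εd ^ 2 = γ * η ^ 2 / (16 * Tr) := Real.sq_sqrt (by positivity)
  have hεo2 : εo ^ 2 = γ * η ^ 4 / (128 * Tr * Sr) := Real.sq_sqrt (by positivity)
  have hεdpos : 0 < εd := Real.sqrt_pos.2 (by positivity)
  have hεopos : 0 < εo := Real.sqrt_pos.2 (by positivity)
  -- bad events
  set Bd : ℕ → Set Ω := fun i =>
    {ω | εd < |(∑ k, Xd i k ω) / (Ndiag:ℝ) - norm (f i) ^ 2|} with hBddef
  set BR : ℕ → Set Ω := fun i =>
    {ω | εo < |(∑ k, XR i k ω) / (Noff:ℝ) - (f i * (starRingEnd ℂ) (f (i+1))).re|} with hBRdef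
  set BI : ℕ → Set Ω := fun i =>
    {ω | εo < |(∑ k, XI i k ω) / (Noff:ℝ) - (f i * (starRingEnd ℂ) (f (i+1))).im|} with hBIdef
  -- concentration for each bad event
  have hBd : ∀ i, 1 ≤ i → i < T → μ (Bd i) ≤ ENNReal.ofReal (δ / (2 * Tr)) := by
    intro i h1 h2
    have hind : iIndepFun (fun k : Fin Ndiag => Xd i k) μ :=
      iIndepFun_precomp hIndep
        (g := fun k : Fin Ndiag => (Sum.inl (⟨i, h1, h2⟩, k) :
          {i : ℕ // 1 ≤ i ∧ i < T} × Fin Ndiag ⊕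
            ({i : ℕ // i + 1 < T} × Fin Noff ⊕ {i : ℕ // i + 1 < T} × Fin Noff)))
        (fun a b hab => by simpa using hab)
    have hcon := hoeff_two_sided (μ := μ) hNd0 (fun k => hXdmeas i k)
      (fun k ω => hXdrange i k ω) (fun k => hXdmean i h1 h2 k) hind hεdpos.le
    refine hcon.trans (ENNReal.ofReal_le_ofReal ?_)
    have hexp : 2 * (Ndiag:ℝ) * εd ^ 2 ≥ L := by
      rw [hεd2]
      have h3 : 8 * Tr / (γ * η ^ 2) * L ≤ (Ndiag:ℝ) := hNdiag
      have h4 : (0:ℝ) < γ * η ^ 2 := by positivity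
      rw [ge_iff_le, ← sub_nonneg]
      have : 2 * (Ndiag:ℝ) * (γ * η ^ 2 / (16 * Tr)) - L
          ≥ 2 * (8 * Tr / (γ * η ^ 2) * L) * (γ * η ^ 2 / (16 * Tr)) - L := by
        gcongr
      calc (0:ℝ) ≤ 2 * (8 * Tr / (γ * η ^ 2) * L) * (γ * η ^ 2 / (16 * Tr)) - L := by
            rw [show 2 * (8 * Tr / (γ * η ^ 2) * L) * (γ * η ^ 2 / (16 * Tr)) = L by
              field_simp; ring]
            simp
        _ ≤ _ := this
    calc 2 * Real.exp (-2 * (Ndiag:ℝ) * εd ^ 2) ≤ 2 * Real.exp (-L) :=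
          mul_le_mul_of_nonneg_left (Real.exp_le_exp.2 (by nlinarith)) (by norm_num)
      _ = δ / (2 * Tr) := by
          rw [hLdef, Real.exp_neg, Real.exp_log (by positivity)]
          field_simp
          ring
  have hoffbound : ∀ (Y : ℕ → Fin Noff → Ω → ℝ), (∀ i k, Measurable (Y i k)) →
      (∀ i k ω, Y i k ω ∈ Set.Icc (0:ℝ) 1) → ∀ (mY : ℕ → ℝ), ∀ i, (hi : i + 1 < T) →
      (∀ k, ∫ ω, Y i k ω ∂μ = mY i) →
      iIndepFun (fun k : Fin Noff => Y i k) μ →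
      μ {ω | εo < |(∑ k, Y i k ω) / (Noff:ℝ) - mY i|} ≤
        ENNReal.ofReal (δ / (4 * (Tr - 1))) := by
    intro Y hYmeas hYrange mY i hi hYmean hind
    have hcon := hoeff_two_sided (μ := μ) hNo0 (fun k => hYmeas i k)
      (fun k ω => hYrange i k ω) hYmean hind hεopos.le
    refine hcon.trans (ENNReal.ofReal_le_ofReal ?_)
    have hNoff' : 64 * Tr * Sr / (γ * η ^ 4) * L' ≤ (Noff:ℝ) := by
      refine le_trans (le_of_eq ?_) hNoff
      rw [show 2 * Tr ^ 3 - 3 * Tr ^ 2 + Tr = 6 * Sr from hSr6.symm]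
      field_simp
      ring
    have hexp : 2 * (Noff:ℝ) * εo ^ 2 ≥ L' := by
      rw [hεo2, ge_iff_le, ← sub_nonneg]
      have : 2 * (Noff:ℝ) * (γ * η ^ 4 / (128 * Tr * Sr)) - L'
          ≥ 2 * (64 * Tr * Sr / (γ * η ^ 4) * L') * (γ * η ^ 4 / (128 * Tr * Sr)) - L' := by
        gcongr
      calc (0:ℝ) ≤ 2 * (64 * Tr * Sr / (γ * η ^ 4) * L') * (γ * η ^ 4 / (128 * Tr * Sr)) - L' := by
            rw [show 2 * (64 * Tr * Sr / (γ * η ^ 4) * L') * (γ * η ^ 4 / (128 * Tr * Sr)) = L' by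
              field_simp; ring]
            simp
        _ ≤ _ := this
    calc 2 * Real.exp (-2 * (Noff:ℝ) * εo ^ 2) ≤ 2 * Real.exp (-L') :=
          mul_le_mul_of_nonneg_left (Real.exp_le_exp.2 (by nlinarith)) (by norm_num)
      _ = δ / (4 * (Tr - 1)) := by
          have hT1 : (0:ℝ) < Tr - 1 := by linarith
          rw [hL'def, Real.exp_neg, Real.exp_log (by positivity)]
          field_simp
          ring
  have hBR' : ∀ i, i + 1 < T → μ (BR i) ≤ ENNReal.ofReal (δ / (4 * (Tr - 1))) := by
    intro i hi
    exact hoffbound XR hXRmeas hXRrange (fun i => (f i * (starRingEnd ℂ) (f (i+1))).re) i hi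
      (fun k => hXRmean i hi k)
      (iIndepFun_precomp hIndep
        (g := fun k : Fin Noff => (Sum.inr (Sum.inl (⟨i, hi⟩, k)) :
          {i : ℕ // 1 ≤ i ∧ i < T} × Fin Ndiag ⊕
            ({i : ℕ // i + 1 < T} × Fin Noff ⊕ {i : ℕ // i + 1 < T} × Fin Noff)))
        (fun a b hab => by simpa using hab))
  have hBI' : ∀ i, i + 1 < T → μ (BI i) ≤ ENNReal.ofReal (δ / (4 * (Tr - 1))) := by
    intro i hi
    exact hoffbound XI hXImeas hXIrange (fun i => (f i * (starRingEnd ℂ) (f (i+1))).im) i hi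
      (fun k => hXImean i hi k)
      (iIndepFun_precomp hIndep
        (g := fun k : Fin Noff => (Sum.inr (Sum.inr (⟨i, hi⟩, k)) :
          {i : ℕ // 1 ≤ i ∧ i < T} × Fin Ndiag ⊕
            ({i : ℕ // i + 1 < T} × Fin Noff ⊕ {i : ℕ // i + 1 < T} × Fin Noff)))
        (fun a b hab => by simpa using hab))
  -- the good event
  set G : Set Ω := (⋂ i ∈ Finset.Icc 1 (T-1), (Bd i)ᶜ) ∩
      (⋂ i ∈ Finset.range (T-1), ((BR i)ᶜ ∩ (BI i)ᶜ)) with hGdef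
  have hT1R : ((T - 1 : ℕ) : ℝ) = Tr - 1 := by
    rw [hTrdef]
    push_cast [Nat.cast_sub (by omega : 1 ≤ T)]
    ring
  have hGc : μ Gᶜ ≤ ENNReal.ofReal δ := by
    have hsub : Gᶜ ⊆ (⋃ i ∈ Finset.Icc 1 (T-1), Bd i) ∪
        (⋃ i ∈ Finset.range (T-1), (BR i ∪ BI i)) := by
      intro ω hω
      simp only [hGdef, Set.mem_compl_iff, Set.mem_inter_iff, not_and_or, Set.mem_iInter,
        not_forall, Set.mem_compl_iff, not_not] at hω
      rcases hω with ⟨i, hi, hBI2⟩ | ⟨i, hi, hBI2⟩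
      · exact Set.mem_union_left _ (Set.mem_biUnion hi hBI2)
      · refine Set.mem_union_right _ (Set.mem_biUnion hi ?_)
        rcases hBI2 with h | h
        · exact Set.mem_union_left _ h
        · exact Set.mem_union_right _ h
    calc μ Gᶜ ≤ μ ((⋃ i ∈ Finset.Icc 1 (T-1), Bd i) ∪
          (⋃ i ∈ Finset.range (T-1), (BR i ∪ BI i))) := measure_mono hsub
      _ ≤ μ (⋃ i ∈ Finset.Icc 1 (T-1), Bd i) +
          μ (⋃ i ∈ Finset.range (T-1), (BR i ∪ BI i)) := measure_union_le _ _
      _ ≤ (∑ i ∈ Finset.Icc 1 (T-1), μ (Bd i)) +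
          ∑ i ∈ Finset.range (T-1), μ (BR i ∪ BI i) := by
          gcongr <;> exact measure_biUnion_finset_le _ _
      _ ≤ (∑ _i ∈ Finset.Icc 1 (T-1), ENNReal.ofReal (δ / (2 * Tr))) +
          ∑ _i ∈ Finset.range (T-1), ENNReal.ofReal (δ / (2 * (Tr - 1))) := by
          gcongr with i hi i hi
          · rcases Finset.mem_Icc.1 hi with ⟨ha, hb⟩
            exact hBd i ha (by omega)
          · have hilt : i + 1 < T := by
              have := Finset.mem_range.1 hi; omega
            calc μ (BR i ∪ BI i) ≤ μ (BR i) + μ (BI i) := measure_union_le _ _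
              _ ≤ ENNReal.ofReal (δ / (4 * (Tr - 1))) + ENNReal.ofReal (δ / (4 * (Tr - 1))) := by
                  gcongr
                  · exact hBR' i hilt
                  · exact hBI' i hilt
              _ = ENNReal.ofReal (δ / (2 * (Tr - 1))) := by
                  have hT1 : (0:ℝ) < Tr - 1 := by linarith
                  rw [← ENNReal.ofReal_add (div_nonneg hδ0.le (by linarith))
                    (div_nonneg hδ0.le (by linarith))]
                  congr 1
                  field_simp
                  ring
      _ ≤ ENNReal.ofReal (δ / 2) + ENNReal.ofReal (δ / 2) := by
          gcongr
          · rw [Finset.sum_const, Nat.card_Icc]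
            rw [nsmul_eq_mul, ← ENNReal.ofReal_natCast, ← ENNReal.ofReal_mul (by positivity)]
            apply ENNReal.ofReal_le_ofReal
            have heq : ((T - 1 + 1 - 1 : ℕ) : ℝ) = Tr - 1 := by
              rw [show T - 1 + 1 - 1 = T - 1 from rfl, hT1R]
            rw [heq]
            have h1 : (0:ℝ) < 2 * Tr := by linarith
            have hd : (2 * Tr) * (δ / (2 * Tr)) = δ := mul_div_cancel₀ δ h1.ne'
            have hd0 : 0 ≤ δ / (2 * Tr) := div_nonneg hδ0.le h1.le
            nlinarith
          · rw [Finset.sum_const, Finset.card_range]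
            rw [nsmul_eq_mul, ← ENNReal.ofReal_natCast, ← ENNReal.ofReal_mul (by positivity)]
            apply ENNReal.ofReal_le_ofReal
            rw [hT1R]
            have hT1 : (0:ℝ) < Tr - 1 := by linarith
            have : (Tr - 1) * (δ / (2 * (Tr - 1))) = δ / 2 := by
              field_simp
            rw [this]
      _ = ENNReal.ofReal δ := by
          rw [← ENNReal.ofReal_add (by positivity) (by positivity)]
          norm_num
  -- deterministic analysis on the good event
  have hdet : G ⊆ {ω | Real.sqrt (∑ i ∈ Finset.range T,
      norm (fhat i ω - f i) ^ 2) ≤ η} := by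
    intro ω hω
    simp only [Set.mem_setOf_eq]
    have hgd : ∀ i, 1 ≤ i → i < T →
        |(∑ k, Xd i k ω) / (Ndiag:ℝ) - norm (f i) ^ 2| ≤ εd := by
      intro i h1 h2
      exact not_lt.1 (Set.mem_iInter₂.1 hω.1 i (Finset.mem_Icc.2 ⟨h1, by omega⟩))
    have hgR : ∀ i, i + 1 < T →
        |(∑ k, XR i k ω) / (Noff:ℝ) - (f i * (starRingEnd ℂ) (f (i+1))).re| ≤ εo := by
      intro i hi
      exact not_lt.1 (Set.mem_iInter₂.1 hω.2 i (Finset.mem_range.2 (by omega))).1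
    have hgI : ∀ i, i + 1 < T →
        |(∑ k, XI i k ω) / (Noff:ℝ) - (f i * (starRingEnd ℂ) (f (i+1))).im| ≤ εo := by
      intro i hi
      exact not_lt.1 (Set.mem_iInter₂.1 hω.2 i (Finset.mem_range.2 (by omega))).2
    set B : ℝ := 2 * Real.sqrt 2 * εo / γ with hBdef
    have hBpos : 0 < B := by positivity
    have habsf : ∀ i, i < T → Real.sqrt γ ≤ norm (f i) := by
      intro i hi
      calc Real.sqrt γ ≤ Real.sqrt (norm (f i) ^ 2) := Real.sqrt_le_sqrt (hγf i hi)
        _ = norm (f i) := Real.sqrt_sq (norm_nonneg _)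
    -- phase error propagation
    have hphase : ∀ i, i < T →
        norm (Complex.exp ((θhat i ω : ℂ) * Complex.I)
          - f i / (norm (f i) : ℂ)) ≤ i * B := by
      intro i
      induction i with
      | zero =>
        intro _
        simp [hθ0 ω, hf0]
      | succ i ih =>
        intro hi1
        have hiT : i < T := by omega
        have hprev := ih hiT
        set R : ℝ := (∑ k, XR i k ω) / (Noff:ℝ) with hRdef
        set Ii : ℝ := (∑ k, XI i k ω) / (Noff:ℝ) with hIidef
        set w : ℂ := (R:ℂ) + (Ii:ℂ) * Complex.I with hwdef
        set z : ℂ := f i * (starRingEnd ℂ) (f (i+1)) with hzdef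
        have hfi : f i ≠ 0 := hfne i hiT
        have hfi1 : f (i+1) ≠ 0 := hfne (i+1) hi1
        have ha1 : (norm (f i) : ℂ) ≠ 0 := by
          simpa using norm_ne_zero_iff.mpr hfi
        have habsz : norm z = norm (f i) * norm (f (i+1)) := by
          rw [hzdef, norm_mul, Complex.norm_conj]
        have hzne : z ≠ 0 := by
          rw [hzdef]
          exact mul_ne_zero hfi (by simpa using hfi1)
        have hγz : γ ≤ norm z := by
          rw [habsz]
          calc γ = Real.sqrt γ * Real.sqrt γ := (Real.mul_self_sqrt hγpos.le).symm
            _ ≤ _ := mul_le_mul (habsf i hiT) (habsf (i+1) hi1) hsγ.le (norm_nonneg _)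
        have hwre : (w - z).re = R - z.re := by
          simp [hwdef]
        have hwim : (w - z).im = Ii - z.im := by
          simp [hwdef]
        have hwz : norm (w - z) ≤ Real.sqrt 2 * εo := by
          have h1 : |R - z.re| ≤ εo := by rw [hRdef, hzdef]; exact hgR i hi1
          have h2 : |Ii - z.im| ≤ εo := by rw [hIidef, hzdef]; exact hgI i hi1
          rw [Complex.norm_def, Complex.normSq_apply, hwre, hwim]
          calc Real.sqrt ((R - z.re) * (R - z.re) + (Ii - z.im) * (Ii - z.im))
              ≤ Real.sqrt (εo^2 + εo^2) := Real.sqrt_le_sqrt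
                (by nlinarith only [abs_le.1 h1, abs_le.1 h2])
            _ = Real.sqrt 2 * εo := by
                rw [show εo^2 + εo^2 = 2 * εo^2 by ring, Real.sqrt_mul (by norm_num : (0:ℝ) ≤ 2),
                  Real.sqrt_sq hεopos.le]
        have hEC : norm (Complex.exp (-(w.arg : ℂ) * Complex.I)
            - (starRingEnd ℂ) z / (norm z : ℂ)) ≤ B := by
          refine (phasor_diff w hzne).trans ?_
          rw [hBdef]
          have hzpos : 0 < norm z := lt_of_lt_of_le hγpos hγz
          rw [div_le_div_iff₀ hzpos hγpos]
          have h1 : 2 * norm (w - z) ≤ 2 * (Real.sqrt 2 * εo) := by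
            linarith only [hwz]
          have pa : 0 ≤ (2 * (Real.sqrt 2 * εo) - 2 * norm (w - z)) * γ :=
            mul_nonneg (by linarith only [h1]) hγpos.le
          have pb : 0 ≤ (norm z - γ) * (2 * (Real.sqrt 2 * εo)) :=
            mul_nonneg (by linarith only [hγz]) (by positivity)
          nlinarith only [pa, pb]
        have hstep : Complex.exp ((θhat (i+1) ω : ℂ) * Complex.I)
            = Complex.exp ((θhat i ω : ℂ) * Complex.I)
              * Complex.exp (-(w.arg : ℂ) * Complex.I) := by
          have h1 := hθ (i+1) (by omega) hi1 ω
          simp only [Nat.add_sub_cancel] at h1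
          rw [show θhat (i+1) ω = θhat i ω - w.arg from h1]
          push_cast
          rw [← Complex.exp_add]
          congr 1
          ring
        have hmc : f i * (starRingEnd ℂ) (f i) = ((norm (f i) : ℂ))^2 := by
          rw [Complex.mul_conj, Complex.normSq_eq_norm_sq]
          push_cast
          ring
        have hvstep : f (i+1) / (norm (f (i+1)) : ℂ)
            = (f i / (norm (f i) : ℂ)) * ((starRingEnd ℂ) z / (norm z : ℂ)) := by
          have hcz : (starRingEnd ℂ) z = (starRingEnd ℂ) (f i) * f (i+1) := by
            rw [hzdef, map_mul, Complex.conj_conj]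
          have key : f i / (norm (f i):ℂ) * ((starRingEnd ℂ) z / (norm z:ℂ))
              = f (i+1) / (norm (f (i+1)):ℂ) := by
            rw [hcz, habsz, div_mul_div_comm]
            push_cast
            rw [show f i * ((starRingEnd ℂ) (f i) * f (i+1))
                = ((norm (f i):ℂ))^2 * f (i+1) from by rw [← mul_assoc, hmc],
              show (norm (f i):ℂ) * ((norm (f i):ℂ) * (norm (f (i+1)):ℂ))
                = ((norm (f i):ℂ))^2 * (norm (f (i+1)):ℂ) from by ring,
              mul_div_mul_left _ _ (pow_ne_zero 2 ha1)]
          exact key.symm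
        have hE1 : norm (Complex.exp (-(w.arg:ℂ) * Complex.I)) = 1 := by
          rw [show -(w.arg:ℂ) = ((-w.arg:ℝ):ℂ) from by push_cast; ring]
          exact Complex.norm_exp_ofReal_mul_I _
        have hv1 : norm (f i / (norm (f i):ℂ)) = 1 := by
          rw [norm_div, Complex.norm_real, Real.norm_eq_abs, abs_of_nonneg (norm_nonneg _),
            div_self (norm_ne_zero_iff.mpr hfi)]
        calc norm (Complex.exp ((θhat (i+1) ω : ℂ) * Complex.I)
              - f (i+1) / (norm (f (i+1)) : ℂ))
            = norm ((Complex.exp ((θhat i ω : ℂ) * Complex.I)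
                - f i / (norm (f i) : ℂ)) * Complex.exp (-(w.arg : ℂ) * Complex.I)
              + (f i / (norm (f i) : ℂ))
                * (Complex.exp (-(w.arg : ℂ) * Complex.I)
                  - (starRingEnd ℂ) z / (norm z : ℂ))) := by
              rw [hstep, hvstep]
              congr 1
              ring
          _ ≤ norm ((Complex.exp ((θhat i ω : ℂ) * Complex.I)
                - f i / (norm (f i) : ℂ)) * Complex.exp (-(w.arg : ℂ) * Complex.I))
              + norm ((f i / (norm (f i) : ℂ))
                * (Complex.exp (-(w.arg : ℂ) * Complex.I)
                  - (starRingEnd ℂ) z / (norm z : ℂ))) := norm_add_le _ _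
          _ ≤ (i:ℝ) * B + B := by
              rw [norm_mul, norm_mul, hE1, hv1, mul_one, one_mul]
              exact add_le_add hprev hEC
          _ = ((i+1 : ℕ):ℝ) * B := by push_cast; ring
    -- per-coordinate error bound
    have hmag : ∀ i, 1 ≤ i → i < T →
        norm (fhat i ω - f i) ≤ εd / Real.sqrt γ + (i:ℝ) * B := by
      intro i h1 h2
      set s : ℝ := (∑ k, Xd i k ω) / (Ndiag:ℝ) with hsdef
      have hs0 : 0 ≤ s := by
        rw [hsdef]
        exact div_nonneg (Finset.sum_nonneg fun k _ => (hXdrange i k ω).1) hNdR.le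
      set b : ℝ := norm (f i) with hbdef
      have hb0 : 0 < b := norm_pos_iff.mpr (hfne i h2)
      have hbγ : Real.sqrt γ ≤ b := habsf i h2
      have hb1 : b ≤ 1 := hfle i h2
      have hsd : |s - b^2| ≤ εd := hgd i h1 h2
      have hsqrt : |Real.sqrt s - b| ≤ εd / Real.sqrt γ := by
        rw [div_eq_mul_inv, ← div_eq_mul_inv, le_div_iff₀ hsγ]
        have hss : Real.sqrt s * Real.sqrt s = s := Real.mul_self_sqrt hs0
        have hsplus : Real.sqrt γ ≤ Real.sqrt s + b := by
          linarith only [hbγ, Real.sqrt_nonneg s]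
        calc |Real.sqrt s - b| * Real.sqrt γ ≤ |Real.sqrt s - b| * (Real.sqrt s + b) := by
              apply mul_le_mul_of_nonneg_left hsplus (abs_nonneg _)
          _ = |s - b^2| := by
              rw [← abs_of_nonneg (show (0:ℝ) ≤ Real.sqrt s + b by positivity), ← abs_mul]
              congr 1
              linear_combination hss
          _ ≤ εd := hsd
      have hufh : fhat i ω = (Real.sqrt s : ℂ) * Complex.exp ((θhat i ω : ℂ) * Complex.I) := by
        rw [hfhat i h1 h2 ω, hsdef, abs_of_nonneg (by
          exact div_nonneg (Finset.sum_nonneg fun k _ => (hXdrange i k ω).1) hNdR.le)]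
      have hfv : f i = (b:ℂ) * (f i / (b:ℂ)) := by
        rw [mul_div_cancel₀]
        simpa [hbdef] using norm_ne_zero_iff.mpr (hfne i h2)
      have hbne : (b:ℂ) ≠ 0 := by
        simp only [ne_eq, Complex.ofReal_eq_zero]
        exact hb0.ne'
      have hdecomp : fhat i ω - f i
          = (((Real.sqrt s : ℝ):ℂ) - (b:ℂ)) * Complex.exp ((θhat i ω : ℂ) * Complex.I)
            + (b:ℂ) * (Complex.exp ((θhat i ω : ℂ) * Complex.I) - f i / (b:ℂ)) := by
        rw [hufh]
        field_simp
        ring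
      calc norm (fhat i ω - f i)
          ≤ norm ((((Real.sqrt s : ℝ):ℂ) - (b:ℂ))
              * Complex.exp ((θhat i ω : ℂ) * Complex.I))
            + norm ((b:ℂ) * (Complex.exp ((θhat i ω : ℂ) * Complex.I) - f i / (b:ℂ))) := by
            rw [hdecomp]
            exact norm_add_le _ _
        _ ≤ εd / Real.sqrt γ + (i:ℝ) * B := by
            rw [norm_mul, norm_mul, Complex.norm_exp_ofReal_mul_I, mul_one, ← Complex.ofReal_sub,
              Complex.norm_real, Real.norm_eq_abs, Complex.norm_real, Real.norm_eq_abs, abs_of_nonneg hb0.le]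
            have h3 : norm (Complex.exp ((θhat i ω : ℂ) * Complex.I) - f i / (b:ℂ))
                ≤ (i:ℝ) * B := hphase i h2
            have h4 : b * norm (Complex.exp ((θhat i ω : ℂ) * Complex.I) - f i / (b:ℂ))
                ≤ 1 * ((i:ℝ) * B) :=
              mul_le_mul hb1 h3 (norm_nonneg _) (by norm_num)
            rw [one_mul] at h4
            exact add_le_add hsqrt h4
    -- sum the squares
    have hsum : ∑ i ∈ Finset.range T, norm (fhat i ω - f i) ^ 2 ≤ η ^ 2 := by
      have hsplit : ∑ i ∈ Finset.range T, norm (fhat i ω - f i) ^ 2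
          = norm (fhat 0 ω - f 0) ^ 2
            + ∑ i ∈ Finset.Ico 1 T, norm (fhat i ω - f i) ^ 2 := by
        rw [Finset.range_eq_Ico, Finset.sum_eq_sum_Ico_succ_bot (by omega : 0 < T)]
      have h00 : norm (fhat 0 ω - f 0) ^ 2 = 0 := by
        rw [hfhat0 ω, hf0]
        simp
      have hSr' : ∑ i ∈ Finset.Ico 1 T, (i:ℝ) ^ 2 = Sr := by
        rw [hSrdef, Finset.range_eq_Ico, Finset.sum_eq_sum_Ico_succ_bot (by omega : 0 < T)]
        norm_num
      have hterm : ∀ i ∈ Finset.Ico 1 T, norm (fhat i ω - f i) ^ 2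
          ≤ 2 * (εd^2 / γ) + 2 * B^2 * (i:ℝ)^2 := by
        intro i hi
        rcases Finset.mem_Ico.1 hi with ⟨h1, h2⟩
        have h3 := hmag i h1 h2
        have h4 : norm (fhat i ω - f i) ^ 2 ≤ (εd / Real.sqrt γ + (i:ℝ) * B) ^ 2 := by
          apply pow_le_pow_left₀ (norm_nonneg _) h3
        have h5 : (εd / Real.sqrt γ)^2 = εd^2 / γ := by
          rw [div_pow, Real.sq_sqrt hγpos.le]
        nlinarith only [h4, h5, sq_nonneg (εd / Real.sqrt γ - (i:ℝ) * B)]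
      have hIcocard : (Finset.Ico 1 T).card = T - 1 := by
        rw [Nat.card_Ico]
      have hbig : ∑ i ∈ Finset.Ico 1 T, norm (fhat i ω - f i) ^ 2
          ≤ (Tr - 1) * (2 * (εd^2 / γ)) + 2 * B^2 * Sr := by
        calc ∑ i ∈ Finset.Ico 1 T, norm (fhat i ω - f i) ^ 2
            ≤ ∑ i ∈ Finset.Ico 1 T, (2 * (εd^2 / γ) + 2 * B^2 * (i:ℝ)^2) :=
              Finset.sum_le_sum hterm
          _ = (Finset.Ico 1 T).card * (2 * (εd^2 / γ)) + 2 * B^2 * ∑ i ∈ Finset.Ico 1 T, (i:ℝ)^2 := by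
              rw [Finset.sum_add_distrib, Finset.sum_const, nsmul_eq_mul, ← Finset.mul_sum]
          _ = (Tr - 1) * (2 * (εd^2 / γ)) + 2 * B^2 * Sr := by
              rw [hIcocard, hT1R, hSr']
      -- numeric conclusion
      have hB2 : B^2 = 8 * εo^2 / γ^2 := by
        rw [hBdef]
        rw [div_pow]
        congr 1
        rw [mul_pow, mul_pow, Real.sq_sqrt (by norm_num : (0:ℝ) ≤ 2)]
        ring
      have hfirst : (Tr - 1) * (2 * (εd^2 / γ)) ≤ η^2 / 8 := by
        rw [hεd2]
        have hTrpos : (0:ℝ) < Tr := by linarith only [hTr2]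
        have key : (Tr - 1) * (2 * (γ * η ^ 2 / (16 * Tr) / γ)) = (Tr - 1) * η^2 / (8 * Tr) := by
          field_simp
          ring
        rw [key]
        rw [div_le_div_iff₀ (by positivity) (by norm_num : (0:ℝ) < 8)]
        nlinarith only [sq_nonneg η, hTr2]
      have hsecond : 2 * B^2 * Sr ≤ η^2 / 2 := by
        rw [hB2, hεo2]
        have key : 2 * (8 * (γ * η ^ 4 / (128 * Tr * Sr)) / γ^2) * Sr = η^4 / (8 * Tr * γ) := by
          field_simp
          ring
        rw [key]
        rw [div_le_div_iff₀ (by positivity) (by norm_num : (0:ℝ) < 2)]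
        nlinarith only [mul_le_mul_of_nonneg_left hη2.le (sq_nonneg η)]
      rw [hsplit, h00, zero_add]
      calc ∑ i ∈ Finset.Ico 1 T, norm (fhat i ω - f i) ^ 2
          ≤ (Tr - 1) * (2 * (εd^2 / γ)) + 2 * B^2 * Sr := hbig
        _ ≤ η^2 / 8 + η^2 / 2 := add_le_add hfirst hsecond
        _ ≤ η^2 := by linarith only [sq_nonneg η]
    calc Real.sqrt (∑ i ∈ Finset.range T, norm (fhat i ω - f i) ^ 2)
        ≤ Real.sqrt (η^2) := Real.sqrt_le_sqrt hsum
      _ = η := Real.sqrt_sq hη.le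
  -- conclude
  refine le_trans ?_ (measure_mono hdet)
  calc ENNReal.ofReal (1 - δ) = 1 - ENNReal.ofReal δ := by
        rw [ENNReal.ofReal_sub 1 hδ0.le, ENNReal.ofReal_one]
    _ ≤ 1 - μ Gᶜ := tsub_le_tsub_left hGc 1
    _ ≤ μ G := by
        rw [tsub_le_iff_right]
        calc (1:ENNReal) = μ Set.univ := (measure_univ (μ := μ)).symm
          _ = μ (G ∪ Gᶜ) := by rw [Set.union_compl_self]
          _ ≤ μ G + μ Gᶜ := measure_union_le _ _
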